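/- Let R be a commutative ring, ι a type, H = FreeGroup ι, and M a left R[H]-module. The R-linear map from the direct sum ⊕_{i∈ι} M (finitely supported functions ι →₀ M) to I_{R[H]} ⊗_{R[H]} M which sends the element concentrated at index i with value m to the class of ((of i) − 1) ⊗ₜ m is an isomorphism of R-modules; in particular I_{R[H]} ⊗_{R[H]} M is isomorphic to a direct sum of copies of M indexed by ι. -/

import Mathlib

/-!
STATEMENT 2: Let `R` be a commutative ring, `ι` a type, `H = FreeGroup ι`, and `M` a left
`R[H]`-module. The `R`-linear map `(ι →₀ M) → I_{R[H]} ⊗_{R[H]} M` sending the element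
concentrated at index `i` with value `m` to the class of `((of i) - 1) ⊗ₜ m` is an
isomorphism of `R`-modules.
-/

open scoped TensorProduct

/-- The augmentation `R[G] →ₐ[R] R` of the group ring `R[G] = MonoidAlgebra R G`. -/
noncomputable def augmentation (R : Type*) [CommRing R] (G : Type*) [Group G] :
    MonoidAlgebra R G →ₐ[R] R :=
  MonoidAlgebra.lift R R G 1

/-- The augmentation ideal `I_{R[G]}` of the group ring. -/
noncomputable def augIdeal (R : Type*) [CommRing R] (G : Type*) [Group G] :
    Ideal (MonoidAlgebra R G) :=
  RingHom.ker (augmentation R G).toRingHom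

theorem mul_of_mem_augIdeal {R : Type*} [CommRing R] {G : Type*} [Group G]
    (x : augIdeal R G) (g : G) :
    (x : MonoidAlgebra R G) * MonoidAlgebra.of R G g ∈ augIdeal R G := by
  have hx : augmentation R G (x : MonoidAlgebra R G) = 0 := x.2
  simp [augIdeal, RingHom.mem_ker, map_mul, hx]

theorem of_sub_one_mem_augIdeal (R : Type*) [CommRing R] {G : Type*} [Group G] (g : G) :
    MonoidAlgebra.of R G g - 1 ∈ augIdeal R G := by
  simp [augIdeal, RingHom.mem_ker, map_sub, augmentation]

section AugTensor

variable (R : Type*) [CommRing R] (H : Type*) [Group H]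
variable (M : Type*) [AddCommGroup M] [Module R M]
  [Module (MonoidAlgebra R H) M] [IsScalarTower R (MonoidAlgebra R H) M]

noncomputable local instance : AddCommGroup ((augIdeal R H) ⊗[R] M) :=
  @TensorProduct.addCommGroup R _ (augIdeal R H) M _ _ _ _

/-- The `R`-submodule of relations defining `I_{R[H]} ⊗_{R[H]} M` as a quotient of
`I_{R[H]} ⊗[R] M`: it is generated by the elements `(x * h) ⊗ₜ m - x ⊗ₜ (h • m)`. -/
noncomputable def augTensorRel : Submodule R ((augIdeal R H) ⊗[R] M) :=
  Submodule.span R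
    {z | ∃ (x : augIdeal R H) (h : H) (m : M),
      z = (⟨(x : MonoidAlgebra R H) * MonoidAlgebra.of R H h,
            mul_of_mem_augIdeal x h⟩ : augIdeal R H) ⊗ₜ[R] m
          - x ⊗ₜ[R] ((MonoidAlgebra.of R H h) • m)}

/-- The tensor product `I_{R[H]} ⊗_{R[H]} M` of the augmentation ideal with a left
`R[H]`-module `M`. -/
noncomputable def augTensor : Type _ :=
  ((augIdeal R H) ⊗[R] M) ⧸ augTensorRel R H M

noncomputable instance : AddCommGroup (augTensor R H M) :=
  inferInstanceAs (AddCommGroup (((augIdeal R H) ⊗[R] M) ⧸ augTensorRel R H M))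

noncomputable instance : Module R (augTensor R H M) :=
  inferInstanceAs (Module R (((augIdeal R H) ⊗[R] M) ⧸ augTensorRel R H M))

/-- The class of `x ⊗ₜ m` in `I_{R[H]} ⊗_{R[H]} M`. -/
noncomputable def augTensorMk (x : augIdeal R H) (m : M) : augTensor R H M :=
  Submodule.Quotient.mk (x ⊗ₜ[R] m)

end AugTensor

/-!
The augmentation ideal `I` of `R[F]`, `F = FreeGroup ι`, is free as a right `R[F]`-module on the
elements `xᵢ - 1`: every `a ∈ R[F]` satisfies `a - ε(a) = ∑ (xᵢ - 1) ∂a/∂xᵢ` with the (right) Fox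
derivatives, which obey the product rule `∂(ab) = (∂a) b + ε(a) ∂b`, and this forces uniqueness of
the coefficients. A right module that is free on `ι` tensors with `M` to `ι →₀ M`, the inverse
sending the class of `x ⊗ m` to `(cᵢ • m)ᵢ` where `x = ∑ (xᵢ - 1) cᵢ`.
-/

open MulOpposite (op)

section Augmentation

variable {R : Type*} [CommRing R] {G : Type*} [Group G] {ι : Type*}

@[simp]
theorem augmentation_single (g : G) (r : R) :
    augmentation R G (MonoidAlgebra.single g r) = r := by
  simp [augmentation]

theorem mem_augIdeal_iff {x : MonoidAlgebra R G} : x ∈ augIdeal R G ↔ augmentation R G x = 0 :=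
  Iff.rfl

theorem mul_mem_augIdeal {x : MonoidAlgebra R G} (hx : x ∈ augIdeal R G)
    (c : MonoidAlgebra R G) : x * c ∈ augIdeal R G := by
  rw [mem_augIdeal_iff, map_mul, mem_augIdeal_iff.1 hx, zero_mul]

variable (R) in
noncomputable def augIdealMulLeft (y : augIdeal R G) :
    MonoidAlgebra R G →ₗ[R] augIdeal R G where
  toFun c := ⟨y * c, mul_mem_augIdeal y.2 c⟩
  map_add' a b := Subtype.ext (mul_add _ a b)
  map_smul' r a := Subtype.ext (mul_smul_comm r _ a)

@[simp]
theorem coe_augIdealMulLeft (y : augIdeal R G) (c : MonoidAlgebra R G) :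
    (augIdealMulLeft R y c : MonoidAlgebra R G) = y * c := rfl

variable (R) in
noncomputable def rightCombination (b : ι → augIdeal R G) :
    (ι →₀ MonoidAlgebra R G) →ₗ[R] augIdeal R G :=
  Finsupp.lsum R fun i => augIdealMulLeft R (b i)

@[simp]
theorem rightCombination_single (b : ι → augIdeal R G) (i : ι) (c : MonoidAlgebra R G) :
    rightCombination R b (Finsupp.single i c) = augIdealMulLeft R (b i) c := by
  simp [rightCombination]

theorem rightCombination_op_smul (b : ι → augIdeal R G) (c : MonoidAlgebra R G)
    (f : ι →₀ MonoidAlgebra R G) :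
    (rightCombination R b (op c • f) : MonoidAlgebra R G) = rightCombination R b f * c := by
  induction f using Finsupp.induction_linear with
  | zero => simp
  | add f g hf hg => simp [smul_add, hf, hg, add_mul]
  | single i a =>
    rw [Finsupp.smul_single, op_smul_eq_mul]
    simp only [rightCombination_single, coe_augIdealMulLeft, mul_assoc]

end Augmentation

section AugTensorEquiv

variable {R : Type*} [CommRing R] {H : Type*} [Group H] {ι : Type*}
variable {M : Type*} [AddCommGroup M] [Module R M] [Module (MonoidAlgebra R H) M]

-- The instance used by `augTensorRel`; unification times out when it is synthesized afresh.
noncomputable local instance : AddCommGroup ((augIdeal R H) ⊗[R] M) :=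
  @TensorProduct.addCommGroup R _ (augIdeal R H) M _ _ _ _

variable (R M) in
noncomputable def augTensorMkₗ : augIdeal R H →ₗ[R] M →ₗ[R] augTensor R H M :=
  (TensorProduct.mk R (augIdeal R H) M).compr₂ (augTensorRel R H M).mkQ

theorem augTensorMkₗ_apply (x : augIdeal R H) (m : M) :
    augTensorMkₗ R M x m = augTensorMk R H M x m := rfl

variable (M) in
noncomputable def finsuppToAugTensor (b : ι → augIdeal R H) :
    (ι →₀ M) →ₗ[R] augTensor R H M :=
  Finsupp.lsum R fun i => augTensorMkₗ R M (b i)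

theorem finsuppToAugTensor_single (b : ι → augIdeal R H) (i : ι) (m : M) :
    finsuppToAugTensor M b (Finsupp.single i m) = augTensorMk R H M (b i) m := by
  rw [finsuppToAugTensor, Finsupp.lsum_single, augTensorMkₗ_apply]

variable [IsScalarTower R (MonoidAlgebra R H) M]

theorem augTensorMk_augIdealMulLeft (y : augIdeal R H) (c : MonoidAlgebra R H) (m : M) :
    augTensorMk R H M (augIdealMulLeft R y c) m = augTensorMk R H M y (c • m) := by
  simp only [← augTensorMkₗ_apply]
  induction c using MonoidAlgebra.induction_linear with
  | zero => simp
  | add a b ha hb => simp only [map_add, LinearMap.add_apply, add_smul, ha, hb]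
  | single h r =>
    rw [← MonoidAlgebra.smul_of, map_smul, smul_assoc, map_smul, map_smul, LinearMap.smul_apply]
    congr 1
    exact (Submodule.Quotient.eq _).2 (Submodule.subset_span ⟨y, h, m, rfl⟩)

variable (R ι M) in
noncomputable def finsuppSMul : (ι →₀ MonoidAlgebra R H) →ₗ[R] M →ₗ[R] (ι →₀ M) :=
  Finsupp.lsum R fun i => (Algebra.lsmul R R M).toLinearMap.compr₂ (Finsupp.lsingle i)

@[simp]
theorem finsuppSMul_single (i : ι) (c : MonoidAlgebra R H) (m : M) :
    finsuppSMul R ι M (Finsupp.single i c) m = Finsupp.single i (c • m) := by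
  simp [finsuppSMul]

theorem finsuppSMul_op_smul (c : MonoidAlgebra R H) (f : ι →₀ MonoidAlgebra R H) (m : M) :
    finsuppSMul R ι M (op c • f) m = finsuppSMul R ι M f (c • m) := by
  induction f using Finsupp.induction_linear with
  | zero => simp
  | add f g hf hg => simp only [smul_add, map_add, LinearMap.add_apply, hf, hg]
  | single i a =>
    rw [Finsupp.smul_single, op_smul_eq_mul, finsuppSMul_single, finsuppSMul_single, mul_smul]

theorem augTensorMk_rightCombination (b : ι → augIdeal R H) (f : ι →₀ MonoidAlgebra R H)
    (m : M) :
    augTensorMk R H M (rightCombination R b f) m =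
      finsuppToAugTensor M b (finsuppSMul R ι M f m) := by
  induction f using Finsupp.induction_linear with
  | zero => simp [← augTensorMkₗ_apply]
  | add f g hf hg =>
    simp only [map_add, LinearMap.add_apply, ← augTensorMkₗ_apply] at *
    rw [hf, hg]
  | single i a =>
    rw [rightCombination_single, augTensorMk_augIdealMulLeft, finsuppSMul_single,
      finsuppToAugTensor_single]

variable {b : ι → augIdeal R H} (hb : Function.Bijective (rightCombination R b))

theorem rightCombination_symm_augIdealMulLeft (x : augIdeal R H) (c : MonoidAlgebra R H) :
    (LinearEquiv.ofBijective _ hb).symm (augIdealMulLeft R x c) =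
      op c • (LinearEquiv.ofBijective _ hb).symm x := by
  refine (LinearEquiv.ofBijective _ hb).symm_apply_eq.2 (Subtype.ext ?_)
  rw [LinearEquiv.ofBijective_apply, rightCombination_op_smul,
    LinearEquiv.apply_ofBijective_symm_apply, coe_augIdealMulLeft]

theorem rightCombination_symm_apply (i : ι) :
    (LinearEquiv.ofBijective _ hb).symm (b i) = Finsupp.single i 1 := by
  refine (LinearEquiv.ofBijective _ hb).symm_apply_eq.2 (Subtype.ext ?_)
  simp

theorem augTensorRel_le_ker :
    augTensorRel R H M ≤
      LinearMap.ker (TensorProduct.lift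
        (finsuppSMul R ι M ∘ₗ (LinearEquiv.ofBijective _ hb).symm.toLinearMap)) := by
  rw [augTensorRel, Submodule.span_le]
  rintro _ ⟨x, h, m, rfl⟩
  simp only [SetLike.mem_coe, LinearMap.mem_ker, map_sub, TensorProduct.lift.tmul,
    LinearMap.comp_apply, LinearEquiv.coe_coe, sub_eq_zero]
  exact (congrArg (finsuppSMul R ι M · m) (rightCombination_symm_augIdealMulLeft hb x _)).trans
    (finsuppSMul_op_smul _ _ m)

variable (M) in
noncomputable def augTensorToFinsupp : augTensor R H M →ₗ[R] (ι →₀ M) :=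
  (augTensorRel R H M).liftQ _ (augTensorRel_le_ker hb)

theorem augTensorToFinsupp_mk (x : augIdeal R H) (m : M) :
    augTensorToFinsupp M hb (augTensorMk R H M x m) =
      finsuppSMul R ι M ((LinearEquiv.ofBijective _ hb).symm x) m := rfl

variable (M) in
noncomputable def augTensorEquivOfBijective : (ι →₀ M) ≃ₗ[R] augTensor R H M :=
  LinearEquiv.ofLinearMap (finsuppToAugTensor M b) (augTensorToFinsupp M hb)
    (Submodule.linearMap_qext _ <| TensorProduct.ext' fun x m => by
      change finsuppToAugTensor M b (augTensorToFinsupp M hb (augTensorMk R H M x m)) =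
        augTensorMk R H M x m
      rw [augTensorToFinsupp_mk, ← augTensorMk_rightCombination,
        LinearEquiv.apply_ofBijective_symm_apply])
    (Finsupp.lhom_ext fun i m => by
      rw [LinearMap.comp_apply, finsuppToAugTensor_single, augTensorToFinsupp_mk,
        rightCombination_symm_apply, finsuppSMul_single, one_smul, LinearMap.id_apply])

theorem augTensorEquivOfBijective_single (i : ι) (m : M) :
    augTensorEquivOfBijective M hb (Finsupp.single i m) = augTensorMk R H M (b i) m :=
  finsuppToAugTensor_single b i m

end AugTensorEquiv

namespace FoxCalculus

variable (R : Type*) [CommRing R] (G : Type*) [Group G] (ι : Type*)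

/-- The semidirect product `(ι →₀ R[G]) ⋊ G`, with `G` acting by right multiplication. Lifting
`xᵢ ↦ (xᵢ, single i 1)` from the free group records the Fox derivatives in the second coordinate. -/
@[ext]
structure Pair where
  elem : G
  deriv : ι →₀ MonoidAlgebra R G

variable {R G ι}

namespace Pair

noncomputable instance : Mul (Pair R G ι) :=
  ⟨fun x y => ⟨x.elem * y.elem, op (MonoidAlgebra.of R G y.elem) • x.deriv + y.deriv⟩⟩

noncomputable instance : One (Pair R G ι) := ⟨⟨1, 0⟩⟩

noncomputable instance : Inv (Pair R G ι) :=
  ⟨fun x => ⟨x.elem⁻¹, -(op (MonoidAlgebra.of R G x.elem⁻¹) • x.deriv)⟩⟩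

@[simp] theorem mul_elem (x y : Pair R G ι) : (x * y).elem = x.elem * y.elem := rfl
@[simp] theorem mul_deriv (x y : Pair R G ι) :
    (x * y).deriv = op (MonoidAlgebra.of R G y.elem) • x.deriv + y.deriv := rfl
@[simp] theorem one_elem : (1 : Pair R G ι).elem = 1 := rfl
@[simp] theorem one_deriv : (1 : Pair R G ι).deriv = 0 := rfl
@[simp] theorem inv_elem (x : Pair R G ι) : x⁻¹.elem = x.elem⁻¹ := rfl
@[simp] theorem inv_deriv (x : Pair R G ι) :
    x⁻¹.deriv = -(op (MonoidAlgebra.of R G x.elem⁻¹) • x.deriv) := rfl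

noncomputable instance : Group (Pair R G ι) :=
  Group.ofLeftAxioms
    (fun x y z => by
      ext1 <;> simp [mul_assoc, smul_add, smul_smul, add_assoc, ← MulOpposite.op_mul])
    (fun x => by ext1 <;> simp)
    (fun x => by ext1 <;> simp [smul_smul, ← MulOpposite.op_mul, ← MonoidAlgebra.one_def])

end Pair

variable (R) in
noncomputable def foxLift : FreeGroup ι →* Pair R (FreeGroup ι) ι :=
  FreeGroup.lift fun i => ⟨FreeGroup.of i, Finsupp.single i 1⟩

theorem foxLift_elem (x : FreeGroup ι) : (foxLift R x).elem = x := by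
  let elemHom : Pair R (FreeGroup ι) ι →* FreeGroup ι :=
    ⟨⟨Pair.elem, rfl⟩, fun _ _ => rfl⟩
  exact DFunLike.congr_fun (FreeGroup.ext_hom (f := elemHom.comp (foxLift R)) (g := .id _)
    fun i => by simp [foxLift, elemHom]) x

variable (R) in
/-- The right Fox derivatives `(∂x/∂xᵢ)ᵢ`, normalised so that `x - 1 = ∑ (xᵢ - 1) ∂x/∂xᵢ`. -/
noncomputable def foxDeriv (x : FreeGroup ι) : ι →₀ MonoidAlgebra R (FreeGroup ι) :=
  (foxLift R x).deriv

theorem foxDeriv_mul (x y : FreeGroup ι) :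
    foxDeriv R (x * y) = op (MonoidAlgebra.of R _ y) • foxDeriv R x + foxDeriv R y := by
  simp [foxDeriv, foxLift_elem]

theorem foxDeriv_inv (x : FreeGroup ι) :
    foxDeriv R x⁻¹ = -(op (MonoidAlgebra.of R _ x⁻¹) • foxDeriv R x) := by
  simp [foxDeriv, foxLift_elem]

@[simp]
theorem foxDeriv_one : foxDeriv R (1 : FreeGroup ι) = 0 := by
  simp [foxDeriv]

@[simp]
theorem foxDeriv_of (i : ι) : foxDeriv R (FreeGroup.of i) = Finsupp.single i 1 := by
  simp [foxDeriv, foxLift]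

variable (R ι) in
noncomputable def augIdealGenerator (i : ι) : augIdeal R (FreeGroup ι) :=
  ⟨MonoidAlgebra.of R _ (FreeGroup.of i) - 1, of_sub_one_mem_augIdeal R (FreeGroup.of i)⟩

@[simp]
theorem coe_augIdealGenerator (i : ι) :
    (augIdealGenerator R ι i : MonoidAlgebra R (FreeGroup ι)) =
      MonoidAlgebra.of R _ (FreeGroup.of i) - 1 := rfl

theorem rightCombination_foxDeriv (x : FreeGroup ι) :
    (rightCombination R (augIdealGenerator R ι) (foxDeriv R x) : MonoidAlgebra R (FreeGroup ι)) =
      MonoidAlgebra.of R _ x - 1 := by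
  induction x using FreeGroup.induction_on with
  | C1 => simp [← MonoidAlgebra.one_def]
  | of i => simp
  | inv_of i ih =>
    rw [foxDeriv_inv, map_neg, Submodule.coe_neg, rightCombination_op_smul, ih, sub_mul,
      ← map_mul, mul_inv_cancel, map_one, one_mul, neg_sub]
  | mul x y ihx ihy =>
    rw [foxDeriv_mul, map_add, Submodule.coe_add, rightCombination_op_smul, ihx, ihy, map_mul,
      sub_mul, one_mul, sub_add_sub_cancel]

variable (R ι) in
noncomputable def foxDerivₗ :
    MonoidAlgebra R (FreeGroup ι) →ₗ[R] (ι →₀ MonoidAlgebra R (FreeGroup ι)) :=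
  (MonoidAlgebra.basis _ R).constr R (foxDeriv R)

@[simp]
theorem foxDerivₗ_single (g : FreeGroup ι) (r : R) :
    foxDerivₗ R ι (MonoidAlgebra.single g r) = r • foxDeriv R g := by
  rw [← mul_one r, ← MonoidAlgebra.smul_single', map_smul, foxDerivₗ,
    ← MonoidAlgebra.basis_apply, Module.Basis.constr_basis, mul_one]

theorem foxDerivₗ_of (g : FreeGroup ι) :
    foxDerivₗ R ι (MonoidAlgebra.of R _ g) = foxDeriv R g := by
  rw [MonoidAlgebra.of_apply, foxDerivₗ_single, one_smul]

theorem foxDerivₗ_one : foxDerivₗ R ι 1 = 0 := by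
  rw [MonoidAlgebra.one_def, foxDerivₗ_single, foxDeriv_one, smul_zero]

theorem foxDerivₗ_mul (a b : MonoidAlgebra R (FreeGroup ι)) :
    foxDerivₗ R ι (a * b) =
      op b • foxDerivₗ R ι a + augmentation R _ a • foxDerivₗ R ι b := by
  induction a using MonoidAlgebra.induction_linear with
  | zero => simp
  | add a a' ha ha' => simp only [add_mul, map_add, ha, ha', smul_add, add_smul]; abel
  | single g r =>
    induction b using MonoidAlgebra.induction_linear with
    | zero => simp
    | add b b' hb hb' =>
      simp only [mul_add, map_add, hb, hb', MulOpposite.op_add, add_smul, smul_add]; abel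
    | single h s =>
      rw [MonoidAlgebra.single_mul_single, foxDerivₗ_single, foxDerivₗ_single, foxDerivₗ_single,
        augmentation_single, foxDeriv_mul, ← MonoidAlgebra.smul_of h s, MulOpposite.op_smul,
        smul_add, smul_assoc, smul_comm (op _) r, smul_comm s r, mul_smul, mul_smul]

theorem rightCombination_foxDerivₗ (a : MonoidAlgebra R (FreeGroup ι)) :
    (rightCombination R (augIdealGenerator R ι) (foxDerivₗ R ι a) :
      MonoidAlgebra R (FreeGroup ι)) =
      a - augmentation R _ a • 1 := by
  induction a using MonoidAlgebra.induction_linear with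
  | zero => simp
  | add a b ha hb => rw [map_add, map_add, Submodule.coe_add, ha, hb, map_add, add_smul]; abel
  | single g r =>
    rw [foxDerivₗ_single, map_smul, Submodule.coe_smul_of_tower, rightCombination_foxDeriv,
      augmentation_single, smul_sub, MonoidAlgebra.smul_of]

theorem foxDerivₗ_augIdealGenerator (i : ι) :
    foxDerivₗ R ι (augIdealGenerator R ι i) = Finsupp.single i 1 := by
  rw [coe_augIdealGenerator, map_sub, foxDerivₗ_of, foxDeriv_of, foxDerivₗ_one, sub_zero]

theorem foxDerivₗ_rightCombination (f : ι →₀ MonoidAlgebra R (FreeGroup ι)) :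
    foxDerivₗ R ι (rightCombination R (augIdealGenerator R ι) f) = f := by
  induction f using Finsupp.induction_linear with
  | zero => simp
  | add f g hf hg => rw [map_add, Submodule.coe_add, map_add, hf, hg]
  | single i c =>
    rw [rightCombination_single, coe_augIdealMulLeft, foxDerivₗ_mul,
      mem_augIdeal_iff.1 (augIdealGenerator R ι i).2, zero_smul, add_zero,
      foxDerivₗ_augIdealGenerator, Finsupp.smul_single, op_smul_eq_mul, one_mul]

theorem bijective_rightCombination_augIdealGenerator :
    Function.Bijective (rightCombination R (augIdealGenerator R ι)) := by
  refine Function.bijective_iff_has_inverse.2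
    ⟨fun x => foxDerivₗ R ι x, foxDerivₗ_rightCombination, fun x => Subtype.ext ?_⟩
  rw [rightCombination_foxDerivₗ, mem_augIdeal_iff.1 x.2, zero_smul, sub_zero]

end FoxCalculus

theorem exists_linearEquiv_finsupp_augTensor_freeGroup
    (R : Type*) [CommRing R] (ι : Type*)
    (M : Type*) [AddCommGroup M] [Module R M]
    [Module (MonoidAlgebra R (FreeGroup ι)) M]
    [IsScalarTower R (MonoidAlgebra R (FreeGroup ι)) M] :
    ∃ e : (ι →₀ M) ≃ₗ[R] augTensor R (FreeGroup ι) M,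
      ∀ (i : ι) (m : M),
        e (Finsupp.single i m) =
          augTensorMk R (FreeGroup ι) M
            ⟨MonoidAlgebra.of R (FreeGroup ι) (FreeGroup.of i) - 1,
              of_sub_one_mem_augIdeal R (FreeGroup.of i)⟩ m :=
  ⟨augTensorEquivOfBijective M FoxCalculus.bijective_rightCombination_augIdealGenerator,
    augTensorEquivOfBijective_single _⟩
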